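/- Let (S,T),(U,V) be a twin cotorsion pair on B. If A ↣ B ↠ S is a short exact sequence with S ∈ S and B ∈ B⁻, then A ∈ B⁻. -/

import Mathlib

open CategoryTheory Limits

universe v u

/-- An exact structure (Quillen exact category) on an additive category `C`:
a class of kernel-cokernel pairs (short exact sequences) satisfying Quillen's axioms. -/
structure ExactStructure (C : Type u) [Category.{v} C] [Preadditive C] where
  ses : ∀ ⦃X Y Z : C⦄, (X ⟶ Y) → (Y ⟶ Z) → Prop
  comp_zero : ∀ ⦃X Y Z : C⦄ ⦃i : X ⟶ Y⦄ ⦃d : Y ⟶ Z⦄, ses i d → i ≫ d = 0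
  is_kernel : ∀ ⦃X Y Z : C⦄ ⦃i : X ⟶ Y⦄ ⦃d : Y ⟶ Z⦄, ses i d →
    ∀ ⦃W : C⦄ (g : W ⟶ Y), g ≫ d = 0 → ∃! h : W ⟶ X, h ≫ i = g
  is_cokernel : ∀ ⦃X Y Z : C⦄ ⦃i : X ⟶ Y⦄ ⦃d : Y ⟶ Z⦄, ses i d →
    ∀ ⦃W : C⦄ (g : Y ⟶ W), i ≫ g = 0 → ∃! h : Z ⟶ W, d ≫ h = g
  id_infl : ∀ X : C, ∃ (Z : C) (d : X ⟶ Z), ses (𝟙 X) d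
  id_defl : ∀ X : C, ∃ (W : C) (i : W ⟶ X), ses i (𝟙 X)
  infl_comp : ∀ ⦃X Y Z : C⦄ (i : X ⟶ Y) (j : Y ⟶ Z),
    (∃ (A : C) (d : Y ⟶ A), ses i d) → (∃ (B : C) (e : Z ⟶ B), ses j e) →
    ∃ (A : C) (d : Z ⟶ A), ses (i ≫ j) d
  defl_comp : ∀ ⦃X Y Z : C⦄ (p : X ⟶ Y) (q : Y ⟶ Z),
    (∃ (A : C) (i : A ⟶ X), ses i p) → (∃ (B : C) (j : B ⟶ Y), ses j q) →
    ∃ (A : C) (i : A ⟶ X), ses i (p ≫ q)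
  pullback_defl : ∀ ⦃X Y Z : C⦄ ⦃i : X ⟶ Y⦄ ⦃d : Y ⟶ Z⦄, ses i d → ∀ ⦃Z' : C⦄ (f : Z' ⟶ Z),
    ∃ (Y' : C) (d' : Y' ⟶ Z') (g : Y' ⟶ Y), (∃ (X' : C) (i' : X' ⟶ Y'), ses i' d') ∧
      IsPullback d' g f d
  pushout_infl : ∀ ⦃X Y Z : C⦄ ⦃i : X ⟶ Y⦄ ⦃d : Y ⟶ Z⦄, ses i d → ∀ ⦃X' : C⦄ (g : X ⟶ X'),
    ∃ (Y' : C) (i' : X' ⟶ Y') (g' : Y ⟶ Y'), (∃ (Z' : C) (d' : Y' ⟶ Z'), ses i' d') ∧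
      IsPushout i g g' i'

variable {C : Type u} [Category.{v} C] [Preadditive C] [HasBinaryBiproducts C]

/-- `i` is an inflation (admissible monomorphism). -/
def ExactStructure.Inflation (E : ExactStructure C) {X Y : C} (i : X ⟶ Y) : Prop :=
  ∃ (Z : C) (d : Y ⟶ Z), E.ses i d

/-- `d` is a deflation (admissible epimorphism). -/
def ExactStructure.Deflation (E : ExactStructure C) {Y Z : C} (d : Y ⟶ Z) : Prop :=
  ∃ (X : C) (i : X ⟶ Y), E.ses i d

/-- `Ext^1(X, Y) = 0`: every short exact sequence `Y ↣ M ↠ X` splits. -/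
def ExactStructure.Ext1Zero (E : ExactStructure C) (X Y : C) : Prop :=
  ∀ ⦃M : C⦄ (i : Y ⟶ M) (d : M ⟶ X), E.ses i d → ∃ r : M ⟶ Y, i ≫ r = 𝟙 Y

/-- `P` is projective with respect to the exact structure. -/
def ExactStructure.Proj (E : ExactStructure C) (P : C) : Prop :=
  ∀ ⦃Y Z : C⦄ (d : Y ⟶ Z), E.Deflation d → ∀ g : P ⟶ Z, ∃ h : P ⟶ Y, h ≫ d = g

/-- `I` is injective with respect to the exact structure. -/
def ExactStructure.Inj (E : ExactStructure C) (I : C) : Prop :=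
  ∀ ⦃X Y : C⦄ (i : X ⟶ Y), E.Inflation i → ∀ g : X ⟶ I, ∃ h : Y ⟶ I, i ≫ h = g

def ExactStructure.EnoughProj (E : ExactStructure C) : Prop :=
  ∀ X : C, ∃ (P : C) (p : P ⟶ X), E.Proj P ∧ E.Deflation p

def ExactStructure.EnoughInj (E : ExactStructure C) : Prop :=
  ∀ X : C, ∃ (I : C) (i : X ⟶ I), E.Inj I ∧ E.Inflation i

/-- A class of objects is closed under direct summands (retracts). -/
def ClosedUnderSummands (U : Set C) : Prop :=
  ∀ ⦃X Y : C⦄ (s : Y ⟶ X) (r : X ⟶ Y), s ≫ r = 𝟙 Y → X ∈ U → Y ∈ U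

/-- A cotorsion pair `(U, V)` on an exact category. -/
structure IsCotorsionPair (E : ExactStructure C) (U V : Set C) : Prop where
  ext1 : ∀ ⦃A B : C⦄, A ∈ U → B ∈ V → E.Ext1Zero A B
  approx_left : ∀ B : C, ∃ (VB UB : C) (i : VB ⟶ UB) (d : UB ⟶ B),
    VB ∈ V ∧ UB ∈ U ∧ E.ses i d
  approx_right : ∀ B : C, ∃ (VB UB : C) (i : B ⟶ VB) (d : VB ⟶ UB),
    VB ∈ V ∧ UB ∈ U ∧ E.ses i d
  summands_left : ClosedUnderSummands U
  summands_right : ClosedUnderSummands V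

/-- The subcategory `B⁺` of a twin cotorsion pair, where `W = T ∩ U`. -/
def BPlus (E : ExactStructure C) (V W : Set C) : Set C :=
  fun B => ∃ (V' W' : C) (i : V' ⟶ W') (d : W' ⟶ B), V' ∈ V ∧ W' ∈ W ∧ E.ses i d

/-- The subcategory `B⁻` of a twin cotorsion pair, where `W = T ∩ U`. -/
def BMinus (E : ExactStructure C) (W S : Set C) : Set C :=
  fun B => ∃ (W' S' : C) (i : B ⟶ W') (d : W' ⟶ S'), W' ∈ W ∧ S' ∈ S ∧ E.ses i d

/-- `f` factors through an object of `W`. -/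
def FactorsThru (W : Set C) {X Y : C} (f : X ⟶ Y) : Prop :=
  ∃ (Z : C) (u : X ⟶ Z) (v : Z ⟶ Y), Z ∈ W ∧ u ≫ v = f

/-! Embed `B ↣ W₀ ↠ S₁` with `W₀ ∈ T ∩ U` and `S₁ ∈ S`. The composite `A ↣ B ↣ W₀` is an
inflation, and by the third isomorphism theorem (realised by pushing `B ↣ W₀` out along
`B ↠ S0`) its cokernel is an extension of `S₁` by `S0`. The left class `S` of a cotorsion pair
is closed under extensions: against `T₀ ∈ T`, a sequence `T₀ ↣ M ↠ P` over an extension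
`X₁ ↣ P ↠ X₂` of objects of `S` splits, since `X₁ ↣ P` lifts to `M` (pull back) and the induced
retraction of `T₀` into `ker (M ↠ X₂)` extends to `M` (push out). -/

section ExactCategory

omit [HasBinaryBiproducts C]

omit [Preadditive C] in
theorem ClosedUnderSummands.mem_of_iso {U : Set C} (hU : ClosedUnderSummands U) {X Y : C}
    (e : X ≅ Y) (hX : X ∈ U) : Y ∈ U :=
  hU e.inv e.hom e.inv_hom_id hX

namespace ExactStructure

variable {E : ExactStructure C} {X Y Z : C} {i : X ⟶ Y} {d : Y ⟶ Z}

theorem mono_of_ses (h : E.ses i d) : Mono i := by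
  refine ⟨fun x y hxy => ?_⟩
  obtain ⟨_, -, huniq⟩ := E.is_kernel h (x ≫ i)
    (by rw [Category.assoc, E.comp_zero h, Limits.comp_zero])
  exact (huniq x rfl).trans (huniq y hxy.symm).symm

theorem epi_of_ses (h : E.ses i d) : Epi d := by
  refine ⟨fun x y hxy => ?_⟩
  obtain ⟨_, -, huniq⟩ := E.is_cokernel h (d ≫ x)
    (by rw [← Category.assoc, E.comp_zero h, Limits.zero_comp])
  exact (huniq x rfl).trans (huniq y hxy.symm).symm

theorem exists_section_of_retraction (h : E.ses i d) {r : Y ⟶ X} (hr : i ≫ r = 𝟙 X) :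
    ∃ s : Z ⟶ Y, s ≫ d = 𝟙 Z := by
  obtain ⟨s, hs, -⟩ := E.is_cokernel h (𝟙 Y - r ≫ i)
    (by rw [Preadditive.comp_sub, ← Category.assoc, hr, Category.comp_id, Category.id_comp,
      sub_self])
  refine ⟨s, (epi_of_ses h).left_cancellation _ _ ?_⟩
  rw [← Category.assoc, hs, Preadditive.sub_comp, Category.assoc, E.comp_zero h,
    Limits.comp_zero, sub_zero, Category.id_comp, Category.comp_id]

theorem nonempty_iso_of_isPushout (h : E.ses i d) {X' Y' Z' : C} {g : X ⟶ X'} {g' : Y ⟶ Y'}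
    {i' : X' ⟶ Y'} (hpo : IsPushout i g g' i') {d' : Y' ⟶ Z'} (h' : E.ses i' d') :
    Nonempty (Z ≅ Z') := by
  let u : Y' ⟶ Z := hpo.desc d 0 (by rw [E.comp_zero h, Limits.comp_zero])
  have hu₁ : g' ≫ u = d := hpo.inl_desc _ _ _
  have hu₂ : i' ≫ u = 0 := hpo.inr_desc _ _ _
  obtain ⟨w, hw, -⟩ := E.is_cokernel h' u hu₂
  obtain ⟨v, hv, -⟩ := E.is_cokernel h (g' ≫ d')
    (by rw [← Category.assoc, hpo.w, Category.assoc, E.comp_zero h', Limits.comp_zero])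
  have huv : u ≫ v = d' := by
    apply hpo.hom_ext
    · rw [← Category.assoc, hu₁, hv]
    · rw [← Category.assoc, hu₂, Limits.zero_comp, E.comp_zero h']
  refine ⟨⟨v, w, (epi_of_ses h).left_cancellation _ _ ?_,
    (epi_of_ses h').left_cancellation _ _ ?_⟩⟩
  · rw [← Category.assoc, hv, Category.assoc, hw, hu₁, Category.comp_id]
  · rw [← Category.assoc, hw, huv, Category.comp_id]

theorem nonempty_iso_of_isPullback (h : E.ses i d) {X' Y' Z' : C} {d' : Y' ⟶ Z'}
    {g : Y' ⟶ Y} {f : Z' ⟶ Z} (hpb : IsPullback d' g f d) {i' : X' ⟶ Y'} (h' : E.ses i' d') :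
    Nonempty (X' ≅ X) := by
  let u : X ⟶ Y' := hpb.lift 0 i (by rw [Limits.zero_comp, E.comp_zero h])
  have hu₁ : u ≫ d' = 0 := hpb.lift_fst _ _ _
  have hu₂ : u ≫ g = i := hpb.lift_snd _ _ _
  obtain ⟨w, hw, -⟩ := E.is_kernel h' u hu₁
  obtain ⟨v, hv, -⟩ := E.is_kernel h (i' ≫ g)
    (by rw [Category.assoc, ← hpb.w, ← Category.assoc, E.comp_zero h', Limits.zero_comp])
  have hvu : v ≫ u = i' := by
    apply hpb.hom_ext
    · rw [Category.assoc, hu₁, Limits.comp_zero, E.comp_zero h']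
    · rw [Category.assoc, hu₂, hv]
  refine ⟨⟨v, w, (mono_of_ses h').right_cancellation _ _ ?_,
    (mono_of_ses h).right_cancellation _ _ ?_⟩⟩
  · rw [Category.assoc, hw, hvu, Category.id_comp]
  · rw [Category.assoc, hv, ← Category.assoc, hw, hu₂, Category.id_comp]

theorem exists_ses_cokernel_comp {A B S₀ W S₁ C₀ : C} {f : A ⟶ B} {g : B ⟶ S₀}
    {i : B ⟶ W} {d : W ⟶ S₁} {q : W ⟶ C₀} (hfg : E.ses f g) (hid : E.ses i d)
    (hq : E.ses (f ≫ i) q) :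
    ∃ (P Z : C) (j : S₀ ⟶ P) (p : P ⟶ Z), E.ses j p ∧ Nonempty (Z ≅ S₁) ∧ Nonempty (P ≅ C₀) := by
  obtain ⟨P, j', g', ⟨Z, p, hp⟩, hpo⟩ := E.pushout_infl hid g
  obtain ⟨eZ⟩ := nonempty_iso_of_isPushout hid hpo hp
  obtain ⟨j, hj, -⟩ := E.is_cokernel hfg (i ≫ q)
    (by rw [← Category.assoc, E.comp_zero hq])
  obtain ⟨e, he, -⟩ := E.is_cokernel hq g'
    (by rw [Category.assoc, hpo.w, ← Category.assoc, E.comp_zero hfg, Limits.zero_comp])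
  let e' : P ⟶ C₀ := hpo.desc q j hj.symm
  have he'₁ : g' ≫ e' = q := hpo.inl_desc _ _ _
  have he'₂ : j' ≫ e' = j := hpo.inr_desc _ _ _
  have hje : j ≫ e = j' := (epi_of_ses hfg).left_cancellation _ _ (by
    rw [← Category.assoc, hj, Category.assoc, he, hpo.w])
  refine ⟨P, Z, j', p, hp, ⟨eZ.symm⟩, ⟨⟨e', e, ?_, ?_⟩⟩⟩
  · apply hpo.hom_ext
    · rw [← Category.assoc, he'₁, he, Category.comp_id]
    · rw [← Category.assoc, he'₂, hje, Category.comp_id]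
  · apply (epi_of_ses hq).left_cancellation
    rw [← Category.assoc, he, he'₁, Category.comp_id]

end ExactStructure

namespace IsCotorsionPair

variable {E : ExactStructure C} {S T : Set C}

theorem exists_lift (hST : IsCotorsionPair E S T) {T₀ M P X : C} {k : T₀ ⟶ M} {m : M ⟶ P}
    (hkm : E.ses k m) (hT₀ : T₀ ∈ T) (hX : X ∈ S) (a : X ⟶ P) : ∃ σ : X ⟶ M, σ ≫ m = a := by
  obtain ⟨M₁, m₁, p₁, ⟨T₁, k₁, hk₁⟩, hpb⟩ := E.pullback_defl hkm a
  obtain ⟨eT⟩ := ExactStructure.nonempty_iso_of_isPullback hkm hpb hk₁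
  obtain ⟨ρ, hρ⟩ := hST.ext1 hX (hST.summands_right.mem_of_iso eT.symm hT₀) k₁ m₁ hk₁
  obtain ⟨s, hs⟩ := ExactStructure.exists_section_of_retraction hk₁ hρ
  exact ⟨s ≫ p₁, by rw [Category.assoc, ← hpb.w, ← Category.assoc, hs, Category.id_comp]⟩

theorem exists_extension (hST : IsCotorsionPair E S T) {K M X T₀ : C} {k : K ⟶ M} {m : M ⟶ X}
    (hkm : E.ses k m) (hX : X ∈ S) (hT₀ : T₀ ∈ T) (ρ : K ⟶ T₀) : ∃ τ : M ⟶ T₀, k ≫ τ = ρ := by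
  obtain ⟨N, k', μ, ⟨Z, n, hn⟩, hpo⟩ := E.pushout_infl hkm ρ
  obtain ⟨eZ⟩ := ExactStructure.nonempty_iso_of_isPushout hkm hpo hn
  obtain ⟨r, hr⟩ := hST.ext1 (hST.summands_left.mem_of_iso eZ hX) hT₀ k' n hn
  exact ⟨μ ≫ r, by rw [← Category.assoc, hpo.w, Category.assoc, hr, Category.comp_id]⟩

theorem ext1Zero_of_ses (hST : IsCotorsionPair E S T) {X₁ P X₂ : C} {a : X₁ ⟶ P} {b : P ⟶ X₂}
    (hab : E.ses a b) (hX₁ : X₁ ∈ S) (hX₂ : X₂ ∈ S) {T₀ : C} (hT₀ : T₀ ∈ T) :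
    E.Ext1Zero P T₀ := by
  intro M k m hkm
  obtain ⟨σ, hσ⟩ := hST.exists_lift hkm hT₀ hX₁ a
  obtain ⟨K, k', hk'⟩ := E.defl_comp m b ⟨T₀, k, hkm⟩ ⟨X₁, a, hab⟩
  obtain ⟨κ, hκ, -⟩ := E.is_kernel hk' k
    (by rw [← Category.assoc, E.comp_zero hkm, Limits.zero_comp])
  obtain ⟨l, hl, -⟩ := E.is_kernel hab (k' ≫ m) (by rw [Category.assoc, E.comp_zero hk'])
  obtain ⟨σ', hσ', -⟩ := E.is_kernel hk' σ (by rw [← Category.assoc, hσ, E.comp_zero hab])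
  -- `K = ker (m ≫ b)` is an extension of `X₁` by `T₀`, split by the lift `σ'` of `a`.
  obtain ⟨ρ, hρ, -⟩ := E.is_kernel hkm ((𝟙 K - l ≫ σ') ≫ k')
    (by simp only [Preadditive.sub_comp, Category.id_comp, Category.assoc, reassoc_of% hσ', hσ,
      hl, sub_self])
  have hκl : κ ≫ l = 0 := (ExactStructure.mono_of_ses hab).right_cancellation _ _
    (by rw [Category.assoc, hl, reassoc_of% hκ, E.comp_zero hkm, Limits.zero_comp])
  have hκρ : κ ≫ ρ = 𝟙 T₀ := (ExactStructure.mono_of_ses hkm).right_cancellation _ _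
    (by simp only [Category.assoc, hρ, Preadditive.sub_comp, Preadditive.comp_sub,
      Category.id_comp, hκ, reassoc_of% hκl, Limits.zero_comp, sub_zero])
  obtain ⟨τ, hτ⟩ := hST.exists_extension hk' hX₂ hT₀ ρ
  exact ⟨τ, by rw [← hκ, Category.assoc, hτ, hκρ]⟩

theorem mem_left_of_ses (hST : IsCotorsionPair E S T) {X₁ P X₂ : C} {a : X₁ ⟶ P} {b : P ⟶ X₂}
    (hab : E.ses a b) (hX₁ : X₁ ∈ S) (hX₂ : X₂ ∈ S) : P ∈ S := by
  obtain ⟨T', S', i, d, hT', hS', hid⟩ := hST.approx_left P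
  obtain ⟨r, hr⟩ := hST.ext1Zero_of_ses hab hX₁ hX₂ hT' i d hid
  obtain ⟨s, hs⟩ := ExactStructure.exists_section_of_retraction hid hr
  exact hST.summands_left s d hs hS'

end IsCotorsionPair

end ExactCategory

theorem bminus_closed_under_s_subobject_general
    (E : ExactStructure C)
    {S T U : Set C} (hST : IsCotorsionPair E S T)
    {A B S0 : C} {f : A ⟶ B} {g : B ⟶ S0}
    (hses : E.ses f g) (hS0 : S0 ∈ S)
    (hB : B ∈ BMinus E (T ∩ U) S) :
    A ∈ BMinus E (T ∩ U) S := by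
  obtain ⟨W₀, S₁, i, d, hW₀, hS₁, hid⟩ := hB
  obtain ⟨C₀, q, hq⟩ := E.infl_comp f i ⟨S0, g, hses⟩ ⟨S₁, d, hid⟩
  obtain ⟨P, Z, j, p, hjp, ⟨eZ⟩, ⟨eP⟩⟩ := ExactStructure.exists_ses_cokernel_comp hses hid hq
  have hZ : Z ∈ S := hST.summands_left.mem_of_iso eZ.symm hS₁
  have hC₀ : C₀ ∈ S := hST.summands_left.mem_of_iso eP (hST.mem_left_of_ses hjp hS0 hZ)
  exact ⟨W₀, C₀, f ≫ i, q, hW₀, hC₀, hq⟩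

/-- if `A ↣ B ↠ S` is a short exact sequence with `S ∈ S` and `B ∈ B⁻`,
then `A ∈ B⁻`. -/
theorem bminus_closed_under_s_subobject
    (E : ExactStructure C) (hP : E.EnoughProj) (hI : E.EnoughInj)
    {S T U V : Set C} (hST : IsCotorsionPair E S T) (hUV : IsCotorsionPair E U V)
    (hSU : S ⊆ U)
    {A B S0 : C} {f : A ⟶ B} {g : B ⟶ S0}
    (hses : E.ses f g) (hS0 : S0 ∈ S)
    (hB : B ∈ BMinus E (T ∩ U) S) :
    A ∈ BMinus E (T ∩ U) S :=
  bminus_closed_under_s_subobject_general E hST hses hS0 hB
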